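/- arXiv:2107.04078 — 4 statements merged into one kernel-verified Lean document; each statement's English description precedes it below -/
import Mathlib

section
/- Let Σ0 and Σf be real symmetric positive definite k×k matrices, let t0 ∈ ℝ and b < 0, and for t ≥ t0 define Σ(t) = Σ0^{−1/2}·[exp(b(t−t0))·Σ0 + (1 − exp(b(t−t0)))·(Σ0^{1/2}·Σf·Σ0^{1/2})^{1/2}]²·Σ0^{−1/2}, where M^{1/2} denotes the unique positive semidefinite square root of a positive semidefinite matrix M. Then for every t ≥ t0, the matrix Σ(t) is symmetric and positive definite. -/
open Real Matrix
open scoped Classical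

/-- The (unique) positive semidefinite square root of a positive semidefinite
real matrix (junk value `0` if the matrix is not positive semidefinite). -/
noncomputable def psdSqrt {k : ℕ} (M : Matrix (Fin k) (Fin k) ℝ) :
    Matrix (Fin k) (Fin k) ℝ :=
  if h : M.PosSemidef then
    h.1.eigenvectorUnitary.1 * Matrix.diagonal ((↑) ∘ (√·) ∘ h.1.eigenvalues) *
      (star h.1.eigenvectorUnitary : Matrix (Fin k) (Fin k) ℝ)
  else 0

section aux

variable {k : ℕ}

lemma posDef_of_posSemidef_isUnit {A : Matrix (Fin k) (Fin k) ℝ}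
    (hA : A.PosSemidef) (hU : IsUnit A) : A.PosDef := by
  refine PosDef.of_dotProduct_mulVec_pos hA.1 fun x hx => ?_
  refine lt_of_le_of_ne (hA.dotProduct_mulVec_nonneg x) fun h => hx ?_
  have h0 : A *ᵥ x = 0 := (hA.dotProduct_mulVec_zero_iff x).mp h.symm
  have hinj := Matrix.mulVec_injective_iff_isUnit.mpr hU
  have : A *ᵥ x = A *ᵥ 0 := by simpa using h0
  exact hinj this

lemma posDef_conj {A C : Matrix (Fin k) (Fin k) ℝ} (hA : A.PosDef) (hC : IsUnit C) :
    (Cᴴ * A * C).PosDef := by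
  refine posDef_of_posSemidef_isUnit (hA.posSemidef.conjTranspose_mul_mul_same C) ?_
  have : IsUnit Cᴴ := by
    rcases hC with ⟨u, rfl⟩
    exact ⟨star u, rfl⟩
  exact (this.mul hA.isUnit).mul hC

lemma posDef_smul {A : Matrix (Fin k) (Fin k) ℝ} (hA : A.PosDef) {c : ℝ} (hc : 0 < c) :
    (c • A).PosDef := by
  exact hA.smul hc

lemma posSemidef_smul {A : Matrix (Fin k) (Fin k) ℝ} (hA : A.PosSemidef) {c : ℝ} (hc : 0 ≤ c) :
    (c • A).PosSemidef := by
  exact hA.smul hc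

lemma posDef_sqrt {A : Matrix (Fin k) (Fin k) ℝ} (hA : A.PosDef) :
    (hA.posSemidef.1.eigenvectorUnitary.1 *
      Matrix.diagonal (((↑) : ℝ → ℝ) ∘ (√·) ∘ hA.posSemidef.1.eigenvalues) *
      (star hA.posSemidef.1.eigenvectorUnitary : Matrix (Fin k) (Fin k) ℝ)).PosDef := by
  have hD : (Matrix.diagonal ((↑) ∘ (√·) ∘ hA.posSemidef.1.eigenvalues) :
      Matrix (Fin k) (Fin k) ℝ).PosDef :=
    PosDef.diagonal fun i => by simpa using Real.sqrt_pos.mpr (hA.eigenvalues_pos i)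
  have hC : IsUnit (star (hA.posSemidef.1.eigenvectorUnitary.1 : Matrix (Fin k) (Fin k) ℝ)) :=
    ⟨⟨star hA.posSemidef.1.eigenvectorUnitary.1, hA.posSemidef.1.eigenvectorUnitary.1,
      Unitary.star_mul_self_of_mem hA.posSemidef.1.eigenvectorUnitary.2,
      Unitary.mul_star_self_of_mem hA.posSemidef.1.eigenvectorUnitary.2⟩, rfl⟩
  have := posDef_conj hD hC
  rwa [← Matrix.star_eq_conjTranspose, star_star] at this

lemma psdSqrt_posDef {A : Matrix (Fin k) (Fin k) ℝ} (hA : A.PosDef) :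
    (psdSqrt A).PosDef := by
  rw [psdSqrt, dif_pos hA.posSemidef]
  exact posDef_sqrt hA

end aux

/-- The matrix-square-root interpolation of covariances
`Σ(t) = Σ0^{-1/2} [exp(b(t−t0)) Σ0 + (1 − exp(b(t−t0))) (Σ0^{1/2} Σf Σ0^{1/2})^{1/2}]² Σ0^{-1/2}`
is symmetric positive definite for every `t ≥ t0`. -/
theorem covariance_interpolation_posDef
    (k : ℕ) (S0 Sf : Matrix (Fin k) (Fin k) ℝ)
    (hS0 : S0.PosDef) (hSf : Sf.PosDef) (t0 b : ℝ) (hb : b < 0)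
    (S : ℝ → Matrix (Fin k) (Fin k) ℝ)
    (hS : ∀ t, S t = (psdSqrt S0)⁻¹ *
      (Real.exp (b * (t - t0)) • S0 +
        (1 - Real.exp (b * (t - t0))) • psdSqrt (psdSqrt S0 * Sf * psdSqrt S0)) ^ 2 *
      (psdSqrt S0)⁻¹) :
    ∀ t, t0 ≤ t → (S t).IsSymm ∧ (S t).PosDef := by
  intro t ht
  set B := psdSqrt S0 with hBdef
  have hB : B.PosDef := psdSqrt_posDef hS0
  have hM : (B * Sf * B).PosDef := by
    have := posDef_conj hSf hB.isUnit
    rwa [hB.isHermitian.eq] at this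
  have hR : (psdSqrt (B * Sf * B)).PosDef := psdSqrt_posDef hM
  set e := Real.exp (b * (t - t0)) with hedef
  have he0 : 0 < e := Real.exp_pos _
  have he1 : e ≤ 1 := by
    rw [hedef]
    apply Real.exp_le_one_iff.mpr
    have : 0 ≤ t - t0 := sub_nonneg.mpr ht
    exact mul_nonpos_of_nonpos_of_nonneg hb.le this
  have hA : (e • S0 + (1 - e) • psdSqrt (B * Sf * B)).PosDef :=
    (posDef_smul hS0 he0).add_posSemidef
      (posSemidef_smul hR.posSemidef (by linarith))
  set A := e • S0 + (1 - e) • psdSqrt (B * Sf * B) with hAdef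
  have hA2 : (A ^ 2).PosDef := by
    refine posDef_of_posSemidef_isUnit (hA.posSemidef.pow 2) ?_
    rw [Matrix.isUnit_iff_isUnit_det, Matrix.det_pow]
    exact (hA.det_pos.ne').isUnit.pow 2
  have hfin : (B⁻¹ * A ^ 2 * B⁻¹).PosDef := by
    have := posDef_conj hA2 (Matrix.isUnit_nonsing_inv_iff.mpr hB.isUnit)
    rwa [hB.inv.isHermitian.eq] at this
  have hst : S t = B⁻¹ * A ^ 2 * B⁻¹ := by rw [hS t]
  rw [hst]
  refine ⟨?_, hfin⟩
  have := hfin.isHermitian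
  rwa [Matrix.IsHermitian, Matrix.conjTranspose_eq_transpose_of_trivial] at this
end

section
/- Let n be a positive integer and for each i ∈ {1,…,n} let V_i ⊆ ℝ² be a bounded measurable set, p_i, C_i ∈ ℝ², and M_i ≥ 0. Let ψ : ℝ² → ℝ be a measurable function (representing the time derivative ∂φ/∂t of the coverage density) and A₁ ≥ 0 a constant with |ψ(q)| ≤ A₁ for all q. Let k₀ ≥ 0 and suppose k₁ is a constant satisfying k₁·‖p_i − C_i‖² ≥ A₁/2 for every i. Assume q ↦ ‖q − p_i‖²·ψ(q) and q ↦ ‖q − p_i‖² are integrable over V_i for each i. Then Σ_{i=1}^{n} [ ∫_{V_i} ‖q − p_i‖²·ψ(q) dq − 2k₀·M_i·‖p_i − C_i‖² − 2k₁·‖p_i − C_i‖²·∫_{V_i} ‖q − p_i‖² dq ] ≤ 0. In particular, the time derivative of the locational cost along agent trajectories driven by the controller u_i = −(k₀ + (k₁/M_i)·∫_{V_i} ‖q − p_i‖² dq)(p_i − C_i) is nonpositive. -/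
open Real MeasureTheory

/-- Under the gain condition `k₁‖p_i − C_i‖² ≥ A₁/2`, the time
derivative of the locational cost along the closed-loop trajectories,
`Σᵢ [∫_{Vᵢ} ‖q−pᵢ‖² ψ(q) dq − 2k₀ Mᵢ ‖pᵢ−Cᵢ‖² − 2k₁ ‖pᵢ−Cᵢ‖² ∫_{Vᵢ} ‖q−pᵢ‖² dq]`,
is nonpositive. -/
theorem locational_cost_derivative_nonpos
    (n : ℕ) (hn : 0 < n)
    (V : Fin n → Set (EuclideanSpace ℝ (Fin 2)))
    (hVbdd : ∀ i, Bornology.IsBounded (V i))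
    (hVmeas : ∀ i, MeasurableSet (V i))
    (p C : Fin n → EuclideanSpace ℝ (Fin 2))
    (M : Fin n → ℝ) (hM : ∀ i, 0 ≤ M i)
    (ψ : EuclideanSpace ℝ (Fin 2) → ℝ) (hψmeas : Measurable ψ)
    (A1 : ℝ) (hA1 : 0 ≤ A1) (hψbound : ∀ q, |ψ q| ≤ A1)
    (k0 k1 : ℝ) (hk0 : 0 ≤ k0)
    (hk1 : ∀ i, A1 / 2 ≤ k1 * ‖p i - C i‖ ^ 2)
    (hint1 : ∀ i, IntegrableOn (fun q => ‖q - p i‖ ^ 2 * ψ q) (V i))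
    (hint2 : ∀ i, IntegrableOn (fun q => ‖q - p i‖ ^ 2) (V i)) :
    ∑ i, ((∫ q in V i, ‖q - p i‖ ^ 2 * ψ q)
        - 2 * k0 * M i * ‖p i - C i‖ ^ 2
        - 2 * k1 * ‖p i - C i‖ ^ 2 * ∫ q in V i, ‖q - p i‖ ^ 2) ≤ 0 := by
  apply Finset.sum_nonpos
  intro i _
  have hI2 : 0 ≤ ∫ q in V i, ‖q - p i‖ ^ 2 :=
    integral_nonneg fun q => by positivity
  have h1 : (∫ q in V i, ‖q - p i‖ ^ 2 * ψ q) ≤ A1 * ∫ q in V i, ‖q - p i‖ ^ 2 := by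
    rw [← integral_const_mul]
    refine integral_mono (hint1 i) ((hint2 i).const_mul A1) fun q => ?_
    have h := (abs_le.mp (hψbound q)).2
    nlinarith [sq_nonneg ‖q - p i‖]
  have h2 : A1 ≤ 2 * k1 * ‖p i - C i‖ ^ 2 := by linarith [hk1 i]
  have h3 : A1 * (∫ q in V i, ‖q - p i‖ ^ 2) ≤
      2 * k1 * ‖p i - C i‖ ^ 2 * ∫ q in V i, ‖q - p i‖ ^ 2 :=
    mul_le_mul_of_nonneg_right h2 hI2
  have h4 : 0 ≤ 2 * k0 * M i * ‖p i - C i‖ ^ 2 := by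
    have := hM i; positivity
  linarith
end

section
/- Let p, o ∈ ℝ² with d = ‖p − o‖ > 0, let r ≥ 0, and define the dynamic weight w = 2r·‖p − o‖ − ‖p − o‖². Then every q ∈ ℝ² satisfying the OAVC obstacle constraint ‖q − p‖² ≤ ‖q − o‖² − w also satisfies ‖q − o‖ ≥ r; that is, the constraint set is disjoint from the open disk of radius r centered at o. -/
open Real

/-- With the dynamic weight `w = 2r‖p − o‖ − ‖p − o‖²`, every
point satisfying the OAVC obstacle constraint `‖q − p‖² ≤ ‖q − o‖² − w` lies
outside the open disk of radius `r` centered at `o`. -/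
theorem OAVC_avoids_obstacle
    (p o : EuclideanSpace ℝ (Fin 2)) (hd : 0 < ‖p - o‖)
    (r : ℝ) (hr : 0 ≤ r) (w : ℝ)
    (hw : w = 2 * r * ‖p - o‖ - ‖p - o‖ ^ 2) :
    ∀ q : EuclideanSpace ℝ (Fin 2),
      ‖q - p‖ ^ 2 ≤ ‖q - o‖ ^ 2 - w → r ≤ ‖q - o‖ := by
  intro q hq
  have h1 : |‖q - o‖ - ‖p - o‖| ≤ ‖(q - o) - (p - o)‖ := abs_norm_sub_norm_le _ _
  have h2 : (q - o) - (p - o) = q - p := by abel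
  rw [h2] at h1
  have h3 : (‖q - o‖ - ‖p - o‖) ^ 2 ≤ ‖q - p‖ ^ 2 := by
    rw [← sq_abs]
    exact pow_le_pow_left₀ (abs_nonneg _) h1 2
  nlinarith [hq, hd]
end

section
/- Let p, o ∈ ℝ² with d = ‖p − o‖ > 0, let r ≥ 0 with r < d, and define the dynamic weight w = 2r·‖p − o‖ − ‖p − o‖². Then the boundary line L = { q ∈ ℝ² : ‖q − p‖² = ‖q − o‖² − w } of the OAVC obstacle constraint is tangent to the circle of radius r centered at o: the Euclidean distance from o to L equals exactly r (i.e., inf_{q ∈ L} ‖q − o‖ = r, and this infimum is attained). -/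
open Real

/-- With the dynamic weight `w = 2r‖p − o‖ − ‖p − o‖²` and
`0 ≤ r < ‖p − o‖`, the boundary line `L = {q : ‖q − p‖² = ‖q − o‖² − w}` of
the OAVC obstacle constraint is tangent to the circle of radius `r` centered
at `o`: the distance from `o` to `L` equals `r` and is attained. -/
theorem OAVC_boundary_tangent
    (p o : EuclideanSpace ℝ (Fin 2)) (hd : 0 < ‖p - o‖)
    (r : ℝ) (hr : 0 ≤ r) (hrd : r < ‖p - o‖) (w : ℝ)
    (hw : w = 2 * r * ‖p - o‖ - ‖p - o‖ ^ 2)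
    (L : Set (EuclideanSpace ℝ (Fin 2)))
    (hL : L = {q | ‖q - p‖ ^ 2 = ‖q - o‖ ^ 2 - w}) :
    (∀ q ∈ L, r ≤ ‖q - o‖) ∧ (∃ q ∈ L, ‖q - o‖ = r) := by
  subst hw hL
  have key : ∀ q : EuclideanSpace ℝ (Fin 2),
      (q ∈ {q | ‖q - p‖ ^ 2 = ‖q - o‖ ^ 2 - (2 * r * ‖p - o‖ - ‖p - o‖ ^ 2)}) ↔
      (inner ℝ (q - o) (p - o) : ℝ) = r * ‖p - o‖ := by
    intro q
    have h1 : q - p = (q - o) - (p - o) := by abel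
    simp only [Set.mem_setOf_eq, h1, norm_sub_sq_real, inner_sub_left, inner_sub_right,
      real_inner_self_eq_norm_sq]
    constructor <;> intro h <;> linarith [real_inner_comm p o, real_inner_comm q o,
      real_inner_comm q p]
  constructor
  · intro q hq
    have h := (key q).mp hq
    have hcs := abs_real_inner_le_norm (q - o) (p - o)
    have : r * ‖p - o‖ ≤ ‖q - o‖ * ‖p - o‖ := by
      calc r * ‖p - o‖ = inner ℝ (q - o) (p - o) := h.symm
        _ ≤ |(inner ℝ (q - o) (p - o) : ℝ)| := le_abs_self _
        _ ≤ ‖q - o‖ * ‖p - o‖ := hcs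
    exact le_of_mul_le_mul_right this hd
  · refine ⟨o + (r / ‖p - o‖) • (p - o), ?_, ?_⟩
    · apply (key _).mpr
      have h2 : (o + (r / ‖p - o‖) • (p - o)) - o = (r / ‖p - o‖) • (p - o) := by abel
      rw [h2, real_inner_smul_left, real_inner_self_eq_norm_sq]
      field_simp
    · have h2 : (o + (r / ‖p - o‖) • (p - o)) - o = (r / ‖p - o‖) • (p - o) := by abel
      rw [h2, norm_smul, Real.norm_eq_abs, abs_of_nonneg (div_nonneg hr hd.le)]
      field_simp
end
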